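/- Let f : X → B be a wrinkled fibration and p ∈ Crit_f a cusp point. Then the vertical space V_p = ker(df|_p), which is 3-dimensional, decomposes as V_p = F⁺_p ∪ F⁰_p ∪ F⁻_p into positive, null and negative vectors with respect to the intrinsic second derivative δ²_p f (with cokernel oriented by the cusp direction): F⁰_p is the union of two planes intersecting in the line T_p Crit_f, while F⁺_p and F⁻_p each have exactly two convex (hence contractible) components; moreover, in any model coordinates (t,x,y,z) one has ∂_y|_p ∈ F⁺_p and ∂_z|_p ∈ F⁻_p. -/

import Mathlib

/-! In model coordinates `dC|₀ = dt`, so `V = {t = 0}`, and on `V` the form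
`q = 2 (y − z) (y + z)` is a product of two linear forms. Hence `q` vanishes exactly on the
planes `y = ± z`, and it is positive (negative) exactly where the two factors have the same
(opposite) signs: a pair of convex wedges exchanged by `v ↦ -v`. -/

noncomputable section

/-- The cusp model `C(t,x,y,z) = (t, x³ + 3tx + y² − z²)`.  By definition of a
cusp point of a wrinkled fibration `f : X → B`, in suitable model coordinates
centered at the cusp point `p` (and at `f(p)`) the map `f` is exactly this model,
under which the vertical space `V_p = ker(df|_p)`, the intrinsic second
derivative `δ²_p f` (with cokernel oriented by the cusp direction) and
`T_p Crit_f` correspond to `ker(dC|₀)`, the Hessian form `v ↦ 2 v_y² − 2 v_z²`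
(represented by `diag(0,2,−2)`), and the tangent of the critical curve
`x ↦ (−x², x, 0, 0)` at `0`. -/
def CuspModel : (Fin 4 → ℝ) → (Fin 2 → ℝ) := fun p =>
  ![p 0, (p 1) ^ 3 + 3 * p 0 * p 1 + (p 2) ^ 2 - (p 3) ^ 2]

/-- The coordinate vectors `∂_t, ∂_x, ∂_y, ∂_z`. -/
def e (i : Fin 4) : Fin 4 → ℝ := Pi.single i 1

/-- The vertical space at the cusp point: `V = ker(dC|₀)`. -/
def V : Set (Fin 4 → ℝ) := {v | v ∈ LinearMap.ker (fderiv ℝ CuspModel 0 : (Fin 4 → ℝ) →ₗ[ℝ] (Fin 2 → ℝ))}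

/-- The intrinsic second derivative at the cusp, in model coordinates. -/
def q (v : Fin 4 → ℝ) : ℝ := 2 * (v 2) ^ 2 - 2 * (v 3) ^ 2

/-- Positive vectors. -/
def Fplus : Set (Fin 4 → ℝ) := {v | v ∈ V ∧ 0 < q v}
/-- Null vectors. -/
def Fnull : Set (Fin 4 → ℝ) := {v | v ∈ V ∧ q v = 0}
/-- Negative vectors. -/
def Fminus : Set (Fin 4 → ℝ) := {v | v ∈ V ∧ q v < 0}

section ProductOfLinearForms

variable {E : Type*} [AddCommGroup E] [Module ℝ E] (K : Submodule ℝ E) (a b : E →ₗ[ℝ] ℝ)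

theorem setOf_mem_and_mul_pos_eq_union :
    {v | v ∈ K ∧ 0 < a v * b v} =
      {v | v ∈ K ∧ 0 < a v ∧ 0 < b v} ∪ {v | v ∈ K ∧ a v < 0 ∧ b v < 0} := by
  ext v
  simp only [Set.mem_ofPred_eq, Set.mem_union, mul_pos_iff, and_or_left]

theorem convex_setOf_mem_and_pos_and_pos : Convex ℝ {v | v ∈ K ∧ 0 < a v ∧ 0 < b v} :=
  K.convex.inter ((convex_halfSpace_gt a.isLinear 0).inter (convex_halfSpace_gt b.isLinear 0))

theorem convex_setOf_mem_and_neg_and_neg : Convex ℝ {v | v ∈ K ∧ a v < 0 ∧ b v < 0} :=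
  K.convex.inter ((convex_halfSpace_lt a.isLinear 0).inter (convex_halfSpace_lt b.isLinear 0))

theorem disjoint_setOf_pos_and_pos_setOf_neg_and_neg :
    Disjoint {v | v ∈ K ∧ 0 < a v ∧ 0 < b v} {v | v ∈ K ∧ a v < 0 ∧ b v < 0} :=
  Set.disjoint_left.mpr fun _ ⟨_, hpos, _⟩ ⟨_, hneg, _⟩ => hpos.not_gt hneg

theorem exists_convex_components_setOf_mem_and_mul_pos [TopologicalSpace E] [ContinuousAdd E]
    [ContinuousSMul ℝ E] {u : E} (hu : u ∈ K) (ha : 0 < a u) (hb : 0 < b u) :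
    ∃ A B : Set E, {v | v ∈ K ∧ 0 < a v * b v} = A ∪ B ∧ Disjoint A B ∧
      A.Nonempty ∧ B.Nonempty ∧ Convex ℝ A ∧ Convex ℝ B ∧ IsConnected A ∧ IsConnected B := by
  have hA : u ∈ {v | v ∈ K ∧ 0 < a v ∧ 0 < b v} := ⟨hu, ha, hb⟩
  have hB : -u ∈ {v | v ∈ K ∧ a v < 0 ∧ b v < 0} := by
    simpa only [Set.mem_ofPred_eq, map_neg, neg_lt_zero, K.neg_mem_iff] using hA
  exact ⟨_, _, setOf_mem_and_mul_pos_eq_union K a b,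
    disjoint_setOf_pos_and_pos_setOf_neg_and_neg K a b, ⟨u, hA⟩, ⟨-u, hB⟩,
    convex_setOf_mem_and_pos_and_pos K a b, convex_setOf_mem_and_neg_and_neg K a b,
    (convex_setOf_mem_and_pos_and_pos K a b).isConnected ⟨u, hA⟩,
    (convex_setOf_mem_and_neg_and_neg K a b).isConnected ⟨-u, hB⟩⟩

end ProductOfLinearForms

local notation "coord" => LinearMap.proj (R := ℝ) (φ := fun _ : Fin 4 => ℝ)

open ContinuousLinearMap in
theorem hasFDerivAt_cuspModel_zero :
    HasFDerivAt CuspModel (pi ![proj 0, 0] : (Fin 4 → ℝ) →L[ℝ] (Fin 2 → ℝ)) 0 := by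
  refine hasFDerivAt_pi'' fun i => ?_
  have hcoord (j : Fin 4) := hasFDerivAt_apply (𝕜 := ℝ) j (0 : Fin 4 → ℝ)
  fin_cases i
  · simpa [CuspModel] using hcoord 0
  · have := ((((hcoord 1).pow 3).add (((hcoord 0).const_mul 3).mul (hcoord 1))).add
      ((hcoord 2).pow 2)).sub ((hcoord 3).pow 2)
    convert this using 1 <;> (try ext) <;> simp [CuspModel, mul_assoc]

theorem ker_fderiv_cuspModel_zero :
    LinearMap.ker (fderiv ℝ CuspModel 0 : (Fin 4 → ℝ) →ₗ[ℝ] (Fin 2 → ℝ)) =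
      LinearMap.ker (coord 0) := by
  ext v
  simp [hasFDerivAt_cuspModel_zero.fderiv, funext_iff, Fin.forall_fin_two]

theorem mem_V_iff (v : Fin 4 → ℝ) : v ∈ V ↔ v 0 = 0 := by
  simp [V, ker_fderiv_cuspModel_zero]

theorem finrank_ker_fderiv_cuspModel_zero :
    Module.finrank ℝ
      (LinearMap.ker (fderiv ℝ CuspModel 0 : (Fin 4 → ℝ) →ₗ[ℝ] (Fin 2 → ℝ))) = 3 := by
  have hproj : coord 0 ≠ 0 := fun h => by
    simpa using LinearMap.congr_fun h (Pi.single 0 1)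
  have := Module.Dual.finrank_ker_add_one_of_ne_zero hproj
  rw [Module.finrank_fin_fun] at this
  rw [ker_fderiv_cuspModel_zero]
  omega

theorem V_eq_union : V = Fplus ∪ Fnull ∪ Fminus := by
  refine Set.ext fun v => ⟨fun hv => ?_, ?_⟩
  · rcases lt_trichotomy (q v) 0 with h | h | h
    exacts [.inr ⟨hv, h⟩, .inl (.inr ⟨hv, h⟩), .inl (.inl ⟨hv, h⟩)]
  · rintro ((⟨hv, -⟩ | ⟨hv, -⟩) | ⟨hv, -⟩) <;> exact hv

theorem hasDerivAt_critical_curve :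
    HasDerivAt (fun x : ℝ => (![-(x ^ 2), x, 0, 0] : Fin 4 → ℝ)) (e 1) 0 := by
  refine hasDerivAt_pi.mpr fun i => ?_
  fin_cases i
  · simpa [e] using (hasDerivAt_pow 2 (0 : ℝ)).fun_neg
  · simpa [e] using hasDerivAt_id' (0 : ℝ)
  all_goals simpa [e] using hasDerivAt_const (0 : ℝ) (0 : ℝ)

theorem q_eq_mul (v : Fin 4 → ℝ) : q v = 2 * ((v 2 - v 3) * (v 2 + v 3)) := by
  rw [q]; ring

theorem q_eq_neg_mul (v : Fin 4 → ℝ) : q v = -(2 * ((v 3 - v 2) * (v 3 + v 2))) := by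
  rw [q]; ring

theorem q_eq_zero_iff (v : Fin 4 → ℝ) : q v = 0 ↔ v 3 = v 2 ∨ v 3 = -v 2 := by
  rw [q, sub_eq_zero, mul_right_inj' two_ne_zero, eq_comm, sq_eq_sq_iff_eq_or_eq_neg]

theorem mem_span_e_one_e_two_add_e_three (v : Fin 4 → ℝ) :
    v ∈ Submodule.span ℝ {e 1, e 2 + e 3} ↔ v 0 = 0 ∧ v 3 = v 2 := by
  rw [Submodule.mem_span_pair]
  constructor
  · rintro ⟨m, n, rfl⟩
    simp [e]
  · rintro ⟨h0, h3⟩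
    refine ⟨v 1, v 2, funext fun i => ?_⟩
    fin_cases i <;> simp [e, h0, h3]

theorem mem_span_e_one_e_two_sub_e_three (v : Fin 4 → ℝ) :
    v ∈ Submodule.span ℝ {e 1, e 2 - e 3} ↔ v 0 = 0 ∧ v 3 = -v 2 := by
  rw [Submodule.mem_span_pair]
  constructor
  · rintro ⟨m, n, rfl⟩
    simp [e]
  · rintro ⟨h0, h3⟩
    refine ⟨v 1, v 2, funext fun i => ?_⟩
    fin_cases i <;> simp [e, h0, h3]

theorem mem_span_e_one (v : Fin 4 → ℝ) :
    v ∈ Submodule.span ℝ {e 1} ↔ v 0 = 0 ∧ v 2 = 0 ∧ v 3 = 0 := by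
  rw [Submodule.mem_span_singleton]
  constructor
  · rintro ⟨m, rfl⟩
    simp [e]
  · rintro ⟨h0, h2, h3⟩
    refine ⟨v 1, funext fun i => ?_⟩
    fin_cases i <;> simp [e, h0, h2, h3]

theorem Fnull_eq_union_span :
    Fnull = (↑(Submodule.span ℝ {e 1, e 2 + e 3})
      ∪ ↑(Submodule.span ℝ {e 1, e 2 - e 3}) : Set (Fin 4 → ℝ)) := by
  ext v
  simp only [Fnull, Set.mem_ofPred_eq, Set.mem_union, SetLike.mem_coe, mem_V_iff, q_eq_zero_iff,
    mem_span_e_one_e_two_add_e_three, mem_span_e_one_e_two_sub_e_three, and_or_left]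

theorem span_inf_span_eq_span_e_one :
    (Submodule.span ℝ {e 1, e 2 + e 3} ⊓ Submodule.span ℝ {e 1, e 2 - e 3}
      : Submodule ℝ (Fin 4 → ℝ)) = Submodule.span ℝ {e 1} := by
  ext v
  simp only [Submodule.mem_inf, mem_span_e_one_e_two_add_e_three,
    mem_span_e_one_e_two_sub_e_three, mem_span_e_one]
  constructor
  · rintro ⟨⟨h0, h3⟩, -, h3'⟩
    exact ⟨h0, by linarith, by linarith⟩
  · rintro ⟨h0, h2, h3⟩
    exact ⟨⟨h0, by rw [h2, h3]⟩, h0, by rw [h2, h3, neg_zero]⟩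

theorem Fplus_eq_setOf_mul_pos :
    Fplus = {v | v ∈ LinearMap.ker (coord 0) ∧
      0 < (coord 2 - coord 3) v * (coord 2 + coord 3) v} := by
  ext v
  simp only [Fplus, Set.mem_ofPred_eq, mem_V_iff, LinearMap.mem_ker, LinearMap.sub_apply,
    LinearMap.add_apply, LinearMap.proj_apply, q_eq_mul,
    mul_pos_iff_of_pos_left (two_pos : (0 : ℝ) < 2)]

theorem Fminus_eq_setOf_mul_pos :
    Fminus = {v | v ∈ LinearMap.ker (coord 0) ∧
      0 < (coord 3 - coord 2) v * (coord 3 + coord 2) v} := by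
  ext v
  simp only [Fminus, Set.mem_ofPred_eq, mem_V_iff, LinearMap.mem_ker, LinearMap.sub_apply,
    LinearMap.add_apply, LinearMap.proj_apply, q_eq_neg_mul, neg_lt_zero,
    mul_pos_iff_of_pos_left (two_pos : (0 : ℝ) < 2)]

/--
At a cusp point of a wrinkled fibration (in model coordinates):
the vertical space `V = ker(df|_p)` is 3-dimensional and decomposes as
`V = F⁺ ∪ F⁰ ∪ F⁻` into positive, null and negative vectors of `δ²_p f`;
`F⁰` is the union of the two planes `span(∂_x, ∂_y ± ∂_z)` intersecting in the
line `T_p Crit_f = span(∂_x)` (the tangent line of the critical curve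
`x ↦ (−x², x, 0, 0)`); `F⁺` and `F⁻` each have exactly two disjoint nonempty
convex (hence contractible) components; and `∂_y ∈ F⁺`, `∂_z ∈ F⁻`.
-/
theorem cusp_vertical_space_decomposition :
    Module.finrank ℝ (LinearMap.ker (fderiv ℝ CuspModel 0 : (Fin 4 → ℝ) →ₗ[ℝ] (Fin 2 → ℝ))) = 3 ∧
    V = Fplus ∪ Fnull ∪ Fminus ∧
    Fnull = (↑(Submodule.span ℝ {e 1, e 2 + e 3})
              ∪ ↑(Submodule.span ℝ {e 1, e 2 - e 3}) : Set (Fin 4 → ℝ)) ∧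
    (Submodule.span ℝ {e 1, e 2 + e 3} ⊓ Submodule.span ℝ {e 1, e 2 - e 3}
        : Submodule ℝ (Fin 4 → ℝ)) = Submodule.span ℝ {e 1} ∧
    HasDerivAt (fun x : ℝ => (![-(x ^ 2), x, 0, 0] : Fin 4 → ℝ)) (e 1) 0 ∧
    (∃ A B : Set (Fin 4 → ℝ), Fplus = A ∪ B ∧ Disjoint A B ∧
        A.Nonempty ∧ B.Nonempty ∧ Convex ℝ A ∧ Convex ℝ B ∧
        IsConnected A ∧ IsConnected B) ∧
    (∃ A B : Set (Fin 4 → ℝ), Fminus = A ∪ B ∧ Disjoint A B ∧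
        A.Nonempty ∧ B.Nonempty ∧ Convex ℝ A ∧ Convex ℝ B ∧
        IsConnected A ∧ IsConnected B) ∧
    e 2 ∈ Fplus ∧ e 3 ∈ Fminus := by
  have he2 : e 2 ∈ LinearMap.ker (coord 0) := by simp [e]
  have he3 : e 3 ∈ LinearMap.ker (coord 0) := by simp [e]
  refine ⟨finrank_ker_fderiv_cuspModel_zero, V_eq_union, Fnull_eq_union_span,
    span_inf_span_eq_span_e_one, hasDerivAt_critical_curve, ?_, ?_, ?_, ?_⟩
  · rw [Fplus_eq_setOf_mul_pos]
    exact exists_convex_components_setOf_mem_and_mul_pos _ _ _ he2 (by simp [e]) (by simp [e])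
  · rw [Fminus_eq_setOf_mul_pos]
    exact exists_convex_components_setOf_mem_and_mul_pos _ _ _ he3 (by simp [e]) (by simp [e])
  · simp [Fplus_eq_setOf_mul_pos, e]
  · simp [Fminus_eq_setOf_mul_pos, e]

end
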